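/- arXiv:2512.15570 — 4 statements merged into one kernel-verified Lean document; each statement's English description precedes it below -/
import Mathlib

section
/- Let L(T,B) = (1−α)∑_{i,l} d_A(v_i,b_l)^q T_{il} + α∑_{i,j,l,m}|R¹_{ij} − R²_{lm}|^q T_{il}T_{jm} be the semi-relaxed Fused Gromov–Wasserstein loss, where α ∈ [0,1], q ≥ 1. Let (T,B) be given, let T̃ be any other transport plan with the same row-marginal constraint and total mass 1, and let B̃ = (b̃_1,…,b̃_k) be chosen so that L(T̃,B̃) ≤ L(T̃,B). Set D_A = max_{i,l} d_A(v_i,b_l) and D_S = max_{i,j,l,m}|R¹_{ij} − R²_{lm}|. Then L(T̃,B̃) − L(T,B) ≤ ((1−α)D_A^q + 2αD_S^q)·∑_{i,l}|T_{il} − T̃_{il}|. -/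
/-!
By the optimality of `B̃` it suffices to bound `L(T̃, B) - L(T, B)`. With the barycenters fixed,
the attribute term is linear in the plan, with coefficients in `[0, D_A^q]`, and the structure
term is a quadratic form with coefficients in `[0, D_S^q]`. Writing `T̃ T̃' - T T' = T̃ (T̃' - T') + (T̃ - T) T'` and using that both plans have
mass one, the quadratic form changes by at most `2 D_S^q ∑ |T - T̃|`.
-/

open Finset

/-- The semi-relaxed Fused Gromov–Wasserstein loss. -/
noncomputable def srFGWloss {n k : ℕ} {X : Type*} [MetricSpace X]
    (α q : ℝ) (v : Fin n → X)
    (R1 : Fin n → Fin n → ℝ) (R2 : Fin k → Fin k → ℝ)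
    (T : Fin n → Fin k → ℝ) (B : Fin k → X) : ℝ :=
  (1 - α) * ∑ i, ∑ l, dist (v i) (B l) ^ q * T i l
    + α * ∑ i, ∑ j, ∑ l, ∑ m, |R1 i j - R2 l m| ^ q * (T i l * T j m)

section WeightedSums

variable {ι : Type*} [Fintype ι] {C : ℝ}

lemma sum_mul_sub_sum_mul_le {c x y : ι → ℝ} (hc0 : ∀ i, 0 ≤ c i) (hcC : ∀ i, c i ≤ C) :
    ∑ i, c i * y i - ∑ i, c i * x i ≤ C * ∑ i, |x i - y i| := by
  rw [← sum_sub_distrib, mul_sum]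
  refine sum_le_sum fun i _ => ?_
  rw [← mul_sub]
  exact mul_le_mul_of_nonneg (hcC i) (abs_sub_comm (x i) (y i) ▸ le_abs_self _) (hc0 i)
    (abs_nonneg _)

lemma mul_sub_mul_le_of_nonneg {a a' b b' : ℝ} (hb : 0 ≤ b) (ha' : 0 ≤ a') :
    b * b' - a * a' ≤ b * |a' - b'| + |a - b| * a' := by
  have h₁ : b * (b' - a') ≤ b * |a' - b'| :=
    mul_le_mul_of_nonneg_left (abs_sub_comm a' b' ▸ le_abs_self _) hb
  have h₂ : (b - a) * a' ≤ |a - b| * a' :=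
    mul_le_mul_of_nonneg_right (abs_sub_comm a b ▸ le_abs_self _) ha'
  linarith

lemma sum_sum_mul_mul_sub_le {c : ι → ι → ℝ} {x y : ι → ℝ} (hc0 : ∀ i j, 0 ≤ c i j)
    (hcC : ∀ i j, c i j ≤ C) (hx : ∀ i, 0 ≤ x i) (hy : ∀ i, 0 ≤ y i) :
    ∑ i, ∑ j, c i j * (y i * y j) - ∑ i, ∑ j, c i j * (x i * x j)
      ≤ C * ((∑ i, y i + ∑ i, x i) * ∑ i, |x i - y i|) := by
  calc ∑ i, ∑ j, c i j * (y i * y j) - ∑ i, ∑ j, c i j * (x i * x j)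
      = ∑ i, ∑ j, c i j * (y i * y j - x i * x j) := by
        simp only [← sum_sub_distrib, mul_sub]
    _ ≤ ∑ i, ∑ j, C * (y i * |x j - y j| + |x i - y i| * x j) :=
        sum_le_sum fun i _ => sum_le_sum fun j _ =>
          mul_le_mul_of_nonneg (hcC i j) (mul_sub_mul_le_of_nonneg (hy i) (hx j)) (hc0 i j)
            (add_nonneg (mul_nonneg (hy i) (abs_nonneg _)) (mul_nonneg (abs_nonneg _) (hx j)))
    _ = C * ((∑ i, y i + ∑ i, x i) * ∑ i, |x i - y i|) := by
        simp only [← mul_sum, sum_add_distrib, ← sum_mul]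
        ring

end WeightedSums

lemma rpow_le_rpow_of_eq_ciSup {ι : Type*} [Finite ι] {f : ι → ℝ} {D q : ℝ}
    (hD : D = ⨆ i, f i) (hf : ∀ i, 0 ≤ f i) (hq : 0 ≤ q) (i : ι) : f i ^ q ≤ D ^ q :=
  Real.rpow_le_rpow (hf i) (hD ▸ le_ciSup (Finite.bddAbove_range f) i) hq

lemma srFGWloss_eq_sum_prod {n k : ℕ} {X : Type*} [MetricSpace X] (α q : ℝ) (v : Fin n → X)
    (R1 : Fin n → Fin n → ℝ) (R2 : Fin k → Fin k → ℝ) (T : Fin n → Fin k → ℝ) (B : Fin k → X) :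
    srFGWloss α q v R1 R2 T B =
      (1 - α) * ∑ p : Fin n × Fin k, dist (v p.1) (B p.2) ^ q * T p.1 p.2
        + α * ∑ p : Fin n × Fin k, ∑ p' : Fin n × Fin k,
            |R1 p.1 p'.1 - R2 p.2 p'.2| ^ q * (T p.1 p.2 * T p'.1 p'.2) := by
  simp only [srFGWloss, Fintype.sum_prod_type]
  congr 2
  exact sum_congr rfl fun i _ => sum_comm

theorem srFGW_loss_perturbation_bound_general
    {n k : ℕ} {X : Type*} [MetricSpace X]
    (α q : ℝ) (hα0 : 0 ≤ α) (hα1 : α ≤ 1) (hq : 1 ≤ q)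
    (v : Fin n → X) (R1 : Fin n → Fin n → ℝ) (R2 : Fin k → Fin k → ℝ)
    (μ : Fin n → ℝ) (hμ_sum : ∑ i, μ i = 1)
    (T Ttilde : Fin n → Fin k → ℝ)
    (hT_nonneg : ∀ i l, 0 ≤ T i l) (hTt_nonneg : ∀ i l, 0 ≤ Ttilde i l)
    (hT_row : ∀ i, ∑ l, T i l = μ i) (hTt_row : ∀ i, ∑ l, Ttilde i l = μ i)
    (B Btilde : Fin k → X)
    (hB_opt : srFGWloss α q v R1 R2 Ttilde Btilde ≤ srFGWloss α q v R1 R2 Ttilde B)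
    (DA DS : ℝ)
    (hDA : DA = ⨆ p : Fin n × Fin k, dist (v p.1) (B p.2))
    (hDS : DS = ⨆ p : (Fin n × Fin n) × (Fin k × Fin k),
      |R1 p.1.1 p.1.2 - R2 p.2.1 p.2.2|) :
    srFGWloss α q v R1 R2 Ttilde Btilde - srFGWloss α q v R1 R2 T B ≤
      ((1 - α) * DA ^ q + 2 * α * DS ^ q) * ∑ i, ∑ l, |T i l - Ttilde i l| := by
  have hq0 : 0 ≤ q := zero_le_one.trans hq
  have hA := rpow_le_rpow_of_eq_ciSup hDA (fun _ => dist_nonneg) hq0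
  have hS := rpow_le_rpow_of_eq_ciSup hDS (fun _ => abs_nonneg _) hq0
  have hmass {P : Fin n → Fin k → ℝ} (hP : ∀ i, ∑ l, P i l = μ i) :
      ∑ p : Fin n × Fin k, P p.1 p.2 = 1 := by
    rw [Fintype.sum_prod_type', sum_congr rfl fun i _ => hP i, hμ_sum]
  have h_attr := sum_mul_sub_sum_mul_le (x := fun p : Fin n × Fin k => T p.1 p.2)
    (y := fun p => Ttilde p.1 p.2) (fun _ => Real.rpow_nonneg dist_nonneg q) hA
  have h_struct := sum_sum_mul_mul_sub_le (x := fun p : Fin n × Fin k => T p.1 p.2)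
    (y := fun p => Ttilde p.1 p.2) (fun _ _ => Real.rpow_nonneg (abs_nonneg _) q)
    (fun p p' => hS ((p.1, p'.1), (p.2, p'.2)))
    (fun p => hT_nonneg p.1 p.2) (fun p => hTt_nonneg p.1 p.2)
  simp only [hmass hT_row, hmass hTt_row] at h_struct
  simp only [srFGWloss_eq_sum_prod] at hB_opt ⊢
  rw [← Fintype.sum_prod_type' (fun i l => |T i l - Ttilde i l|)]
  linarith [mul_le_mul_of_nonneg_left h_attr (sub_nonneg.2 hα1),
    mul_le_mul_of_nonneg_left h_struct hα0]

/-- Perturbation bound for the srFGW loss: replacing a plan `T` by `T̃` and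
re-optimizing the barycenters increases the loss by at most
`((1−α)D_A^q + 2αD_S^q)·∑|T − T̃|`. -/
theorem srFGW_loss_perturbation_bound
    {n k : ℕ} [NeZero n] [NeZero k] {X : Type*} [MetricSpace X]
    (α q : ℝ) (hα0 : 0 ≤ α) (hα1 : α ≤ 1) (hq : 1 ≤ q)
    (v : Fin n → X) (R1 : Fin n → Fin n → ℝ) (R2 : Fin k → Fin k → ℝ)
    (μ : Fin n → ℝ) (hμ_nonneg : ∀ i, 0 ≤ μ i) (hμ_sum : ∑ i, μ i = 1)
    (T Ttilde : Fin n → Fin k → ℝ)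
    (hT_nonneg : ∀ i l, 0 ≤ T i l) (hTt_nonneg : ∀ i l, 0 ≤ Ttilde i l)
    (hT_row : ∀ i, ∑ l, T i l = μ i) (hTt_row : ∀ i, ∑ l, Ttilde i l = μ i)
    (B Btilde : Fin k → X)
    (hB_opt : srFGWloss α q v R1 R2 Ttilde Btilde ≤ srFGWloss α q v R1 R2 Ttilde B)
    (DA DS : ℝ)
    (hDA : DA = ⨆ p : Fin n × Fin k, dist (v p.1) (B p.2))
    (hDS : DS = ⨆ p : (Fin n × Fin n) × (Fin k × Fin k),
      |R1 p.1.1 p.1.2 - R2 p.2.1 p.2.2|) :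
    srFGWloss α q v R1 R2 Ttilde Btilde - srFGWloss α q v R1 R2 T B ≤
      ((1 - α) * DA ^ q + 2 * α * DS ^ q) * ∑ i, ∑ l, |T i l - Ttilde i l| :=
  srFGW_loss_perturbation_bound_general α q hα0 hα1 hq v R1 R2 μ hμ_sum T Ttilde hT_nonneg
    hTt_nonneg hT_row hTt_row B Btilde hB_opt DA DS hDA hDS
end

section
/- With T^{soft}, T^{hard} as in the hard-projection construction, the total deviation satisfies ∑_{i,l}|T^{soft}_{il} − T^{hard}_{il}| ≤ 2(1 − 1/k), with equality attained when T^{soft}_{il} = μ_i/k for all i, l. -/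
open Finset

/-!
Concentrating row `i` on a column `ℓ i` moves the mass `μ i - m_i` off the other columns and
adds the same amount to column `ℓ i`, so row `i` contributes exactly `2 (μ i - m_i)`, where
`m_i = T^soft_{i, ℓ i}` is the row maximum. A maximum is at least the average, `m_i ≥ μ i / k`,
and summing over `i` with `∑ μ i = 1` gives the bound. For the uniform plan `m_i = μ i / k`,
so every inequality is an equality.
-/

lemma sum_abs_sub_ite_sum_eq {ι : Type*} [Fintype ι] [DecidableEq ι] {v : ι → ℝ}
    (hv : ∀ l, 0 ≤ v l) (j : ι) :
    ∑ l, |v l - if l = j then ∑ m, v m else 0| = 2 * (∑ m, v m - v j) := by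
  have hj : v j ≤ ∑ m, v m := single_le_sum (fun l _ => hv l) (mem_univ j)
  have hrest : ∑ l ∈ univ.erase j, v l = ∑ m, v m - v j := by
    rw [← add_sum_erase univ v (mem_univ j)]; ring
  have hoff : ∀ l ∈ univ.erase j, |v l - if l = j then ∑ m, v m else 0| = v l :=
    fun l hl => by rw [if_neg (ne_of_mem_erase hl), sub_zero, abs_of_nonneg (hv l)]
  rw [← add_sum_erase _ _ (mem_univ j), sum_congr rfl hoff, hrest, if_pos rfl, abs_sub_comm,
    abs_of_nonneg (by linarith)]
  ring

lemma sum_div_card_le_of_forall_le {ι : Type*} [Fintype ι] {v : ι → ℝ} {j : ι}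
    (hj : ∀ l, v l ≤ v j) : (∑ l, v l) / Fintype.card ι ≤ v j := by
  have : Nonempty ι := ⟨j⟩
  rw [div_le_iff₀ (by exact_mod_cast Fintype.card_pos), mul_comm, ← nsmul_eq_mul]
  exact sum_le_card_nsmul univ v (v j) fun l _ => hj l

theorem soft_to_hard_deviation_bound_general
    {n k : ℕ} [NeZero k]
    (μ : Fin n → ℝ) (hμ_sum : ∑ i, μ i = 1)
    (Tsoft : Fin n → Fin k → ℝ)
    (hT_nonneg : ∀ i l, 0 ≤ Tsoft i l)
    (hT_row : ∀ i, ∑ l, Tsoft i l = μ i)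
    (ℓ : Fin n → Fin k)
    (hℓ : ∀ i, Tsoft i (ℓ i) = univ.sup' univ_nonempty (Tsoft i))
    (Thard : Fin n → Fin k → ℝ)
    (hThard : ∀ i l, Thard i l = if l = ℓ i then μ i else 0) :
    (∑ i, ∑ l, |Tsoft i l - Thard i l| ≤ 2 * (1 - 1 / (k : ℝ))) ∧
    ((∀ i l, Tsoft i l = μ i / (k : ℝ)) →
      ∑ i, ∑ l, |Tsoft i l - Thard i l| = 2 * (1 - 1 / (k : ℝ))) := by
  have hrow : ∀ i, ∑ l, |Tsoft i l - Thard i l| = 2 * (μ i - Tsoft i (ℓ i)) := fun i => by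
    simp only [hThard]
    rw [← hT_row i]
    exact sum_abs_sub_ite_sum_eq (hT_nonneg i) (ℓ i)
  have hmax : ∀ i, μ i / k ≤ Tsoft i (ℓ i) := fun i => by
    have havg :=
      sum_div_card_le_of_forall_le fun l => (hℓ i).symm ▸ le_sup' (Tsoft i) (mem_univ l)
    rwa [hT_row i, Fintype.card_fin] at havg
  have htotal : ∑ i, 2 * (μ i - μ i / k) = 2 * (1 - 1 / (k : ℝ)) := by
    rw [← mul_sum, sum_sub_distrib, ← sum_div, hμ_sum]
  simp only [hrow]
  refine ⟨htotal ▸ sum_le_sum fun i _ => ?_, fun huni => ?_⟩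
  · linarith [hmax i]
  · simp only [huni, htotal]

/-- The soft-to-hard deviation is at most `2(1 − 1/k)`, with equality when the
soft plan spreads every row uniformly: `T^soft_{il} = μ_i/k`. -/
theorem soft_to_hard_deviation_bound
    {n k : ℕ} [NeZero k]
    (μ : Fin n → ℝ) (hμ_nonneg : ∀ i, 0 ≤ μ i) (hμ_sum : ∑ i, μ i = 1)
    (Tsoft : Fin n → Fin k → ℝ)
    (hT_nonneg : ∀ i l, 0 ≤ Tsoft i l)
    (hT_row : ∀ i, ∑ l, Tsoft i l = μ i)
    (ℓ : Fin n → Fin k)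
    (hℓ : ∀ i, Tsoft i (ℓ i) = univ.sup' univ_nonempty (Tsoft i))
    (Thard : Fin n → Fin k → ℝ)
    (hThard : ∀ i l, Thard i l = if l = ℓ i then μ i else 0) :
    (∑ i, ∑ l, |Tsoft i l - Thard i l| ≤ 2 * (1 - 1 / (k : ℝ))) ∧
    ((∀ i l, Tsoft i l = μ i / (k : ℝ)) →
      ∑ i, ∑ l, |Tsoft i l - Thard i l| = 2 * (1 - 1 / (k : ℝ))) :=
  soft_to_hard_deviation_bound_general μ hμ_sum Tsoft hT_nonneg hT_row ℓ hℓ Thard hThard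
end

section
/- Combining the soft-to-hard deviation bound with the loss perturbation bound: if (T^{soft}, B^{soft}) is given and (T^{hard}, B^{hard}) is the hard projection with recomputed barycenters satisfying L(T^{hard}, B^{hard}) ≤ L(T^{hard}, B^{soft}), then L(T^{hard}, B^{hard}) − L(T^{soft}, B^{soft}) ≤ 2((1−α)D_A^q + 2αD_S^q)(1 − 1/k). -/
open Finset

/-!
Concentrating the mass `∑ p` of a row `p ≥ 0` on an entry of maximal weight moves
`2 (∑ p - max p) ≤ 2 (1 - 1/k) ∑ p` of mass in `ℓ¹`, so the hard plan is within `2 (1 - 1/k)` of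
the soft one. The loss is Lipschitz in the plan for this distance: the linear term with constant
`D_A^q`, and the quadratic term with constant `2 D_S^q`, since
`T ⊗ T - S ⊗ S = T ⊗ (T - S) + (T - S) ⊗ S` and both plans have mass one. Recomputing the
barycenters only lowers the loss.
-/

lemma mul_le_of_abs_le_of_abs_le {c x M y : ℝ} (hc : |c| ≤ M) (hx : |x| ≤ y) : c * x ≤ M * y :=
  calc c * x ≤ |c| * |x| := by rw [← abs_mul]; exact le_abs_self _
    _ ≤ M * y := mul_le_mul hc hx (abs_nonneg x) ((abs_nonneg c).trans hc)

section Perturbation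

variable {ι κ : Type*} [Fintype ι] [Fintype κ]

lemma sum_sum_sum_sum_mul_eq (f g : ι → κ → ℝ) :
    ∑ i, ∑ j, ∑ l, ∑ m, f i l * g j m = (∑ i, ∑ l, f i l) * ∑ j, ∑ m, g j m := by
  simp only [sum_mul_sum]

lemma sum_sum_mul_sub_sum_sum_mul_le (c a b : ι → κ → ℝ) {M : ℝ} (hc : ∀ i l, |c i l| ≤ M) :
    ∑ i, ∑ l, c i l * a i l - ∑ i, ∑ l, c i l * b i l ≤ M * ∑ i, ∑ l, |a i l - b i l| := by
  simp only [← sum_sub_distrib, ← mul_sub, mul_sum]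
  exact sum_le_sum fun i _ => sum_le_sum fun l _ => mul_le_of_abs_le_of_abs_le (hc i l) le_rfl

lemma abs_mul_sub_mul_le {a a' b b' : ℝ} (ha : 0 ≤ a) (hb' : 0 ≤ b') :
    |a * a' - b * b'| ≤ a * |a' - b'| + |a - b| * b' :=
  calc |a * a' - b * b'| = |a * (a' - b') + (a - b) * b'| := by ring_nf
    _ ≤ |a * (a' - b')| + |(a - b) * b'| := abs_add_le _ _
    _ = a * |a' - b'| + |a - b| * b' := by rw [abs_mul, abs_mul, abs_of_nonneg ha, abs_of_nonneg hb']

lemma sum_sum_sum_sum_mul_mul_sub_le (c : ι → ι → κ → κ → ℝ) {M : ℝ}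
    (hc : ∀ i j l m, |c i j l m| ≤ M) (a b : ι → κ → ℝ)
    (ha : ∀ i l, 0 ≤ a i l) (hb : ∀ i l, 0 ≤ b i l) :
    ∑ i, ∑ j, ∑ l, ∑ m, c i j l m * (a i l * a j m)
        - ∑ i, ∑ j, ∑ l, ∑ m, c i j l m * (b i l * b j m)
      ≤ M * ((∑ i, ∑ l, a i l) + ∑ i, ∑ l, b i l) * ∑ i, ∑ l, |a i l - b i l| := by
  simp only [← sum_sub_distrib, ← mul_sub]
  calc ∑ i, ∑ j, ∑ l, ∑ m, c i j l m * (a i l * a j m - b i l * b j m)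
      ≤ ∑ i, ∑ j, ∑ l, ∑ m, M * (a i l * |a j m - b j m| + |a i l - b i l| * b j m) := by
        refine sum_le_sum fun i _ => sum_le_sum fun j _ => sum_le_sum fun l _ =>
          sum_le_sum fun m _ => ?_
        exact mul_le_of_abs_le_of_abs_le (hc i j l m) (abs_mul_sub_mul_le (ha i l) (hb j m))
    _ = M * ∑ i, ∑ j, ∑ l, ∑ m, (a i l * |a j m - b j m| + |a i l - b i l| * b j m) := by
        simp only [mul_sum]
    _ = M * ((∑ i, ∑ l, a i l) * (∑ j, ∑ m, |a j m - b j m|)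
          + (∑ i, ∑ l, |a i l - b i l|) * ∑ j, ∑ m, b j m) := by
        simp only [sum_add_distrib, sum_sum_sum_sum_mul_eq]
    _ = _ := by ring

end Perturbation

lemma srFGWloss_sub_srFGWloss_le {n k : ℕ} {X : Type*} [MetricSpace X]
    (α q : ℝ) (hα0 : 0 ≤ α) (hα1 : α ≤ 1) (v : Fin n → X)
    (R1 : Fin n → Fin n → ℝ) (R2 : Fin k → Fin k → ℝ) (B : Fin k → X) {A S : ℝ}
    (hA : ∀ i l, dist (v i) (B l) ^ q ≤ A) (hS : ∀ i j l m, |R1 i j - R2 l m| ^ q ≤ S)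
    {T T' : Fin n → Fin k → ℝ} (hT : ∀ i l, 0 ≤ T i l) (hT' : ∀ i l, 0 ≤ T' i l)
    (hT_mass : ∑ i, ∑ l, T i l = 1) (hT'_mass : ∑ i, ∑ l, T' i l = 1) :
    srFGWloss α q v R1 R2 T B - srFGWloss α q v R1 R2 T' B
      ≤ ((1 - α) * A + 2 * α * S) * ∑ i, ∑ l, |T i l - T' i l| := by
  have hlin := sum_sum_mul_sub_sum_sum_mul_le (fun i l => dist (v i) (B l) ^ q) T T'
    fun i l => (abs_of_nonneg (Real.rpow_nonneg dist_nonneg q)).trans_le (hA i l)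
  have hquad := sum_sum_sum_sum_mul_mul_sub_le (fun i j l m => |R1 i j - R2 l m| ^ q)
    (fun i j l m => (abs_of_nonneg (Real.rpow_nonneg (abs_nonneg _) q)).trans_le (hS i j l m))
    T T' hT hT'
  rw [hT_mass, hT'_mass] at hquad
  unfold srFGWloss
  nlinarith [mul_le_mul_of_nonneg_left hlin (sub_nonneg.2 hα1), mul_le_mul_of_nonneg_left hquad hα0]

section HardProjection

variable {κ : Type*} [Fintype κ] [DecidableEq κ]

lemma sum_abs_ite_sum_sub_eq (p : κ → ℝ) (hp : ∀ l, 0 ≤ p l) (l₀ : κ) :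
    ∑ l, |(if l = l₀ then ∑ l', p l' else 0) - p l| = 2 * (∑ l, p l - p l₀) := by
  have hterm : ∀ l, |(if l = l₀ then ∑ l', p l' else 0) - p l|
      = (if l = l₀ then ∑ l', p l' - 2 * p l else 0) + p l := by
    intro l
    split_ifs with h
    · subst h
      rw [abs_of_nonneg (sub_nonneg.2 (single_le_sum (fun l _ => hp l) (mem_univ l)))]
      ring
    · rw [zero_sub, abs_neg, abs_of_nonneg (hp l), zero_add]
  rw [sum_congr rfl fun l _ => hterm l, sum_add_distrib, sum_ite_eq', if_pos (mem_univ _)]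
  ring

lemma sum_abs_ite_sum_sub_le (p : κ → ℝ) (hp : ∀ l, 0 ≤ p l) {l₀ : κ}
    (hmax : ∀ l, p l ≤ p l₀) :
    ∑ l, |(if l = l₀ then ∑ l', p l' else 0) - p l|
      ≤ 2 * (1 - 1 / Fintype.card κ) * ∑ l, p l := by
  have hcard : (0 : ℝ) < Fintype.card κ := Nat.cast_pos.2 (Fintype.card_pos_iff.2 ⟨l₀⟩)
  have hmean : (∑ l, p l) / Fintype.card κ ≤ p l₀ := by
    rw [div_le_iff₀' hcard]
    simpa using sum_le_card_nsmul univ p (p l₀) fun l _ => hmax l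
  rw [sum_abs_ite_sum_sub_eq p hp]
  have : 2 * (1 - 1 / (Fintype.card κ : ℝ)) * ∑ l, p l
      = 2 * (∑ l, p l - (∑ l, p l) / Fintype.card κ) := by ring
  linarith

end HardProjection

theorem srFGW_soft_to_hard_loss_bound_general
    {n k : ℕ} [NeZero k] {X : Type*} [MetricSpace X]
    (α q : ℝ) (hα0 : 0 ≤ α) (hα1 : α ≤ 1) (hq : 1 ≤ q)
    (v : Fin n → X) (R1 : Fin n → Fin n → ℝ) (R2 : Fin k → Fin k → ℝ)
    (μ : Fin n → ℝ) (hμ_nonneg : ∀ i, 0 ≤ μ i) (hμ_sum : ∑ i, μ i = 1)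
    (Tsoft : Fin n → Fin k → ℝ)
    (hT_nonneg : ∀ i l, 0 ≤ Tsoft i l)
    (hT_row : ∀ i, ∑ l, Tsoft i l = μ i)
    (ℓ : Fin n → Fin k)
    (hℓ : ∀ i, Tsoft i (ℓ i) = univ.sup' univ_nonempty (Tsoft i))
    (Thard : Fin n → Fin k → ℝ)
    (hThard : ∀ i l, Thard i l = if l = ℓ i then μ i else 0)
    (Bsoft Bhard : Fin k → X)
    (hB_opt : srFGWloss α q v R1 R2 Thard Bhard ≤ srFGWloss α q v R1 R2 Thard Bsoft)
    (DA DS : ℝ)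
    (hDA : DA = ⨆ p : Fin n × Fin k, dist (v p.1) (Bsoft p.2))
    (hDS : DS = ⨆ p : (Fin n × Fin n) × (Fin k × Fin k),
      |R1 p.1.1 p.1.2 - R2 p.2.1 p.2.2|) :
    srFGWloss α q v R1 R2 Thard Bhard - srFGWloss α q v R1 R2 Tsoft Bsoft ≤
      2 * ((1 - α) * DA ^ q + 2 * α * DS ^ q) * (1 - 1 / (k : ℝ)) := by
  have hq0 : 0 ≤ q := by linarith
  have hA i l : dist (v i) (Bsoft l) ^ q ≤ DA ^ q := Real.rpow_le_rpow dist_nonneg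
    (hDA ▸ le_ciSup (Finite.bddAbove_range fun p : Fin n × Fin k => dist (v p.1) (Bsoft p.2))
      (i, l)) hq0
  have hS i j l m : |R1 i j - R2 l m| ^ q ≤ DS ^ q := Real.rpow_le_rpow (abs_nonneg _)
    (hDS ▸ le_ciSup (Finite.bddAbove_range fun p : (Fin n × Fin n) × (Fin k × Fin k) =>
      |R1 p.1.1 p.1.2 - R2 p.2.1 p.2.2|) ((i, j), (l, m))) hq0
  have hC : 0 ≤ (1 - α) * DA ^ q + 2 * α * DS ^ q := by
    have := Real.rpow_nonneg (hDA ▸ Real.iSup_nonneg fun _ => dist_nonneg) q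
    have := Real.rpow_nonneg (hDS ▸ Real.iSup_nonneg fun _ => abs_nonneg _) q
    have := sub_nonneg.2 hα1
    positivity
  have hThard_nonneg i l : 0 ≤ Thard i l := by
    rw [hThard]; split_ifs <;> simp [hμ_nonneg]
  have hdev : ∑ i, ∑ l, |Thard i l - Tsoft i l| ≤ 2 * (1 - 1 / (k : ℝ)) := by
    calc ∑ i, ∑ l, |Thard i l - Tsoft i l| ≤ ∑ i, 2 * (1 - 1 / (k : ℝ)) * μ i := by
          gcongr with i
          simpa [hThard, hT_row] using sum_abs_ite_sum_sub_le (Tsoft i) (hT_nonneg i)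
            fun l => hℓ i ▸ le_sup' (Tsoft i) (mem_univ l)
      _ = 2 * (1 - 1 / (k : ℝ)) := by rw [← mul_sum, hμ_sum, mul_one]
  calc _ ≤ srFGWloss α q v R1 R2 Thard Bsoft - srFGWloss α q v R1 R2 Tsoft Bsoft := by linarith
    _ ≤ ((1 - α) * DA ^ q + 2 * α * DS ^ q) * ∑ i, ∑ l, |Thard i l - Tsoft i l| :=
        srFGWloss_sub_srFGWloss_le α q hα0 hα1 v R1 R2 Bsoft hA hS hThard_nonneg hT_nonneg
          (by simp [hThard, hμ_sum]) (by simp [hT_row, hμ_sum])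
    _ ≤ ((1 - α) * DA ^ q + 2 * α * DS ^ q) * (2 * (1 - 1 / (k : ℝ))) := by gcongr
    _ = _ := by ring

/-- Soft-to-hard loss increase bound:
`L(T^hard,B^hard) − L(T^soft,B^soft) ≤ 2((1−α)D_A^q + 2αD_S^q)(1 − 1/k)`. -/
theorem srFGW_soft_to_hard_loss_bound
    {n k : ℕ} [NeZero n] [NeZero k] {X : Type*} [MetricSpace X]
    (α q : ℝ) (hα0 : 0 ≤ α) (hα1 : α ≤ 1) (hq : 1 ≤ q)
    (v : Fin n → X) (R1 : Fin n → Fin n → ℝ) (R2 : Fin k → Fin k → ℝ)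
    (μ : Fin n → ℝ) (hμ_nonneg : ∀ i, 0 ≤ μ i) (hμ_sum : ∑ i, μ i = 1)
    (Tsoft : Fin n → Fin k → ℝ)
    (hT_nonneg : ∀ i l, 0 ≤ Tsoft i l)
    (hT_row : ∀ i, ∑ l, Tsoft i l = μ i)
    (ℓ : Fin n → Fin k)
    (hℓ : ∀ i, Tsoft i (ℓ i) = univ.sup' univ_nonempty (Tsoft i))
    (Thard : Fin n → Fin k → ℝ)
    (hThard : ∀ i l, Thard i l = if l = ℓ i then μ i else 0)
    (Bsoft Bhard : Fin k → X)
    (hB_opt : srFGWloss α q v R1 R2 Thard Bhard ≤ srFGWloss α q v R1 R2 Thard Bsoft)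
    (DA DS : ℝ)
    (hDA : DA = ⨆ p : Fin n × Fin k, dist (v p.1) (Bsoft p.2))
    (hDS : DS = ⨆ p : (Fin n × Fin n) × (Fin k × Fin k),
      |R1 p.1.1 p.1.2 - R2 p.2.1 p.2.2|) :
    srFGWloss α q v R1 R2 Thard Bhard - srFGWloss α q v R1 R2 Tsoft Bsoft ≤
      2 * ((1 - α) * DA ^ q + 2 * α * DS ^ q) * (1 - 1 / (k : ℝ)) :=
  srFGW_soft_to_hard_loss_bound_general α q hα0 hα1 hq v R1 R2 μ hμ_nonneg hμ_sum Tsoft hT_nonneg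
    hT_row ℓ hℓ Thard hThard Bsoft Bhard hB_opt DA DS hDA hDS
end

section
/- For α = 0 and q = 2, the semi-relaxed Fused Gromov–Wasserstein objective reduces to the Fréchet k-means / Wasserstein projection problem on attributes: srFGW_{2,0}(R¹, μ¹, R², A, d_A) = min over T with T𝟙_k = μ¹ and B ∈ X^k of ∑_{i=1}^n ∑_{l=1}^k d_A(v_i, b_l)² T_{il}, and this equals min_{ν ∈ P_k(X)} W_2²(μ_A, ν), where μ_A is the empirical attribute distribution ∑_i μ_i δ_{v_i} and P_k(X) is the set of probability measures on X supported on at most k points. -/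
/-!
For `α = 0` the structural term drops out and the fused objective factors as
`(∑ᵢₗ d(vᵢ, Bₗ)² Tᵢₗ) · (∑ⱼₘ Tⱼₘ)`, whose second factor is the total mass `1`.

A plan `T` with row sums `μ` is a coupling of `μ` with its column sums `w`, a probability
vector; hence the set of k-means costs is the union, over atoms `b` and weights `w`, of the
sets of transport costs from `∑ μᵢ δ_{vᵢ}` to `∑ wₗ δ_{bₗ}`. Each of these sets is nonempty
(product coupling `μᵢ wₗ`) and nonnegative, so the infimum of the union is the infimum of the
infima, i.e. of the `W₂²` values.
-/

open Finset

/-- Squared 2-Wasserstein distance between the empirical attribute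
distribution `∑ μ_i δ_{v_i}` and a discrete measure with atoms `b` and
weights `w`, computed over couplings. -/
noncomputable def W2sq {n k : ℕ} {X : Type*} [MetricSpace X]
    (μ : Fin n → ℝ) (v : Fin n → X) (b : Fin k → X) (w : Fin k → ℝ) : ℝ :=
  sInf {c : ℝ | ∃ T : Fin n → Fin k → ℝ,
    (∀ i l, 0 ≤ T i l) ∧ (∀ i, ∑ l, T i l = μ i) ∧ (∀ l, ∑ i, T i l = w l) ∧
    c = ∑ i, ∑ l, dist (v i) (b l) ^ 2 * T i l}

theorem csInf_iUnion {α ι : Type*} [ConditionallyCompleteLattice α] {C : ι → Set α}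
    (hne : ∀ i, (C i).Nonempty) (hbdd : BddBelow (⋃ i, C i)) :
    sInf (⋃ i, C i) = ⨅ i, sInf (C i) := by
  rcases isEmpty_or_nonempty ι with _ | _
  · simp [iInf_of_isEmpty]
  have hUne : (⋃ i, C i).Nonempty := (hne (Classical.arbitrary ι)).mono (Set.subset_iUnion C _)
  have hbdd_i : ∀ i, BddBelow (C i) := fun i => hbdd.mono (Set.subset_iUnion C i)
  refine le_antisymm (le_ciInf fun i => csInf_le_csInf hbdd (hne i) (Set.subset_iUnion C i)) ?_
  have hrange : BddBelow (Set.range fun i => sInf (C i)) := by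
    obtain ⟨a, ha⟩ := hbdd
    exact ⟨a, Set.forall_mem_range.2 fun i =>
      le_csInf (hne i) fun x hx => ha (Set.mem_iUnion_of_mem i hx)⟩
  refine le_csInf hUne fun x hx => ?_
  obtain ⟨i, hxi⟩ := Set.mem_iUnion.1 hx
  exact (ciInf_le hrange i).trans (csInf_le (hbdd_i i) hxi)

theorem sum_mul_outerProduct_eq_of_sum_eq_one {ι κ : Type*} [Fintype ι] [Fintype κ]
    (C : ι → κ → ℝ) (T : ι → κ → ℝ) (hT : ∑ j, ∑ m, T j m = 1) :
    ∑ i, ∑ j, ∑ l, ∑ m, C i l * (T i l * T j m) = ∑ i, ∑ l, C i l * T i l := by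
  calc ∑ i, ∑ j, ∑ l, ∑ m, C i l * (T i l * T j m)
      = ∑ i, ∑ l, C i l * T i l * ∑ j, ∑ m, T j m := by
        refine sum_congr rfl fun i _ => ?_
        rw [sum_comm]
        simp only [mul_sum, mul_assoc]
    _ = ∑ i, ∑ l, C i l * T i l := by simp only [hT, mul_one]

section Transport

variable {ι κ X : Type*} [Fintype ι] [Fintype κ] [PseudoMetricSpace X]

def transportCosts (μ : ι → ℝ) (v : ι → X) (b : κ → X) (w : κ → ℝ) : Set ℝ :=
  {c | ∃ T : ι → κ → ℝ,
    (∀ i l, 0 ≤ T i l) ∧ (∀ i, ∑ l, T i l = μ i) ∧ (∀ l, ∑ i, T i l = w l) ∧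
    c = ∑ i, ∑ l, dist (v i) (b l) ^ 2 * T i l}

theorem transportCosts_nonempty {μ : ι → ℝ} {w : κ → ℝ} (hμ : μ ∈ stdSimplex ℝ ι)
    (hw : w ∈ stdSimplex ℝ κ) (v : ι → X) (b : κ → X) :
    (transportCosts μ v b w).Nonempty :=
  ⟨_, fun i l => μ i * w l, fun i l => mul_nonneg (hμ.1 i) (hw.1 l),
    fun i => by rw [← mul_sum, hw.2, mul_one],
    fun l => by rw [← sum_mul, hμ.2, one_mul], rfl⟩

theorem nonneg_of_mem_transportCosts {μ : ι → ℝ} {v : ι → X} {b : κ → X} {w : κ → ℝ}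
    {c : ℝ} (hc : c ∈ transportCosts μ v b w) : 0 ≤ c := by
  obtain ⟨T, hT, -, -, rfl⟩ := hc
  exact sum_nonneg fun i _ => sum_nonneg fun l _ => mul_nonneg (sq_nonneg _) (hT i l)

theorem setOf_eq_iUnion_transportCosts {μ : ι → ℝ} (hμ : ∑ i, μ i = 1) (v : ι → X) :
    {c : ℝ | ∃ (T : ι → κ → ℝ) (B : κ → X),
        (∀ i l, 0 ≤ T i l) ∧ (∀ i, ∑ l, T i l = μ i) ∧
        c = ∑ i, ∑ l, dist (v i) (B l) ^ 2 * T i l}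
      = ⋃ p : (κ → X) × stdSimplex ℝ κ, transportCosts μ v p.1 p.2.1 := by
  ext c
  simp only [Set.mem_ofPred_eq, Set.mem_iUnion, Prod.exists, Subtype.exists]
  constructor
  · rintro ⟨T, B, hT, hrow, rfl⟩
    have hcol : (fun l => ∑ i, T i l) ∈ stdSimplex ℝ κ :=
      ⟨fun l => sum_nonneg fun i _ => hT i l, by rw [sum_comm]; simp only [hrow, hμ]⟩
    exact ⟨B, _, hcol, T, hT, hrow, fun l => rfl, rfl⟩
  · rintro ⟨B, w, -, T, hT, hrow, -, rfl⟩
    exact ⟨T, B, hT, hrow, rfl⟩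

end Transport

theorem W2sq_eq_sInf_transportCosts {n k : ℕ} {X : Type*} [MetricSpace X] (μ : Fin n → ℝ)
    (v : Fin n → X) (b : Fin k → X) (w : Fin k → ℝ) :
    W2sq μ v b w = sInf (transportCosts μ v b w) :=
  rfl

theorem srFGW_alpha_zero_eq_frechet_kmeans_general
    {n k : ℕ} {X : Type*} [MetricSpace X]
    (v : Fin n → X)
    (R1 : Fin n → Fin n → ℝ) (R2 : Fin k → Fin k → ℝ)
    (μ1 : Fin n → ℝ) (hμ1_nonneg : ∀ i, 0 ≤ μ1 i) (hμ1_sum : ∑ i, μ1 i = 1) :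
    sInf {c : ℝ | ∃ (T : Fin n → Fin k → ℝ) (B : Fin k → X),
        (∀ i l, 0 ≤ T i l) ∧ (∀ i, ∑ l, T i l = μ1 i) ∧
        c = ∑ i, ∑ j, ∑ l, ∑ m,
          ((1 - (0:ℝ)) * dist (v i) (B l) ^ 2 + 0 * |R1 i j - R2 l m| ^ 2)
            * (T i l * T j m)}
      =
    sInf {c : ℝ | ∃ (T : Fin n → Fin k → ℝ) (B : Fin k → X),
        (∀ i l, 0 ≤ T i l) ∧ (∀ i, ∑ l, T i l = μ1 i) ∧
        c = ∑ i, ∑ l, dist (v i) (B l) ^ 2 * T i l}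
    ∧
    sInf {c : ℝ | ∃ (T : Fin n → Fin k → ℝ) (B : Fin k → X),
        (∀ i l, 0 ≤ T i l) ∧ (∀ i, ∑ l, T i l = μ1 i) ∧
        c = ∑ i, ∑ l, dist (v i) (B l) ^ 2 * T i l}
      =
    sInf {c : ℝ | ∃ (b : Fin k → X) (w : Fin k → ℝ),
        (∀ l, 0 ≤ w l) ∧ (∑ l, w l = 1) ∧
        c = W2sq μ1 v b w} := by
  refine ⟨?_, ?_⟩
  · congr 1
    ext c
    refine exists_congr fun T => exists_congr fun B => and_congr_right fun _ =>
      and_congr_right fun hrow => ?_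
    have hmass : ∑ j, ∑ m, T j m = 1 := by simp only [hrow, hμ1_sum]
    simp only [sub_zero, one_mul, zero_mul, add_zero,
      sum_mul_outerProduct_eq_of_sum_eq_one (fun i l => dist (v i) (B l) ^ 2) T hmass]
  · have hμ1 : μ1 ∈ stdSimplex ℝ (Fin n) := ⟨hμ1_nonneg, hμ1_sum⟩
    have hne (p : (Fin k → X) × stdSimplex ℝ (Fin k)) :
        (transportCosts μ1 v p.1 p.2.1).Nonempty :=
      transportCosts_nonempty hμ1 p.2.2 v p.1
    have hbdd : BddBelow (⋃ p : (Fin k → X) × stdSimplex ℝ (Fin k),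
        transportCosts μ1 v p.1 p.2.1) :=
      ⟨0, fun c hc => by
        obtain ⟨p, hp⟩ := Set.mem_iUnion.1 hc
        exact nonneg_of_mem_transportCosts hp⟩
    rw [setOf_eq_iUnion_transportCosts hμ1_sum v, csInf_iUnion hne hbdd]
    refine congrArg sInf (Set.ext fun c => ?_)
    simp only [Set.mem_range, Prod.exists, Subtype.exists, exists_prop, stdSimplex,
      Set.mem_ofPred_eq, and_assoc, eq_comm (b := c), W2sq_eq_sInf_transportCosts]

/-- For `α = 0`, `q = 2`, the semi-relaxed FGW objective reduces to the
Fréchet k-means / Wasserstein projection problem on the attributes: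
it equals `min_{ν ∈ P_k(X)} W_2²(μ_A, ν)`. -/
theorem srFGW_alpha_zero_eq_frechet_kmeans
    {n k : ℕ} {X : Type*} [MetricSpace X] [Nonempty X]
    (v : Fin n → X)
    (R1 : Fin n → Fin n → ℝ) (R2 : Fin k → Fin k → ℝ)
    (μ1 : Fin n → ℝ) (hμ1_nonneg : ∀ i, 0 ≤ μ1 i) (hμ1_sum : ∑ i, μ1 i = 1) :
    sInf {c : ℝ | ∃ (T : Fin n → Fin k → ℝ) (B : Fin k → X),
        (∀ i l, 0 ≤ T i l) ∧ (∀ i, ∑ l, T i l = μ1 i) ∧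
        c = ∑ i, ∑ j, ∑ l, ∑ m,
          ((1 - (0:ℝ)) * dist (v i) (B l) ^ 2 + 0 * |R1 i j - R2 l m| ^ 2)
            * (T i l * T j m)}
      =
    sInf {c : ℝ | ∃ (T : Fin n → Fin k → ℝ) (B : Fin k → X),
        (∀ i l, 0 ≤ T i l) ∧ (∀ i, ∑ l, T i l = μ1 i) ∧
        c = ∑ i, ∑ l, dist (v i) (B l) ^ 2 * T i l}
    ∧
    sInf {c : ℝ | ∃ (T : Fin n → Fin k → ℝ) (B : Fin k → X),
        (∀ i l, 0 ≤ T i l) ∧ (∀ i, ∑ l, T i l = μ1 i) ∧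
        c = ∑ i, ∑ l, dist (v i) (B l) ^ 2 * T i l}
      =
    sInf {c : ℝ | ∃ (b : Fin k → X) (w : Fin k → ℝ),
        (∀ l, 0 ≤ w l) ∧ (∑ l, w l = 1) ∧
        c = W2sq μ1 v b w} :=
  srFGW_alpha_zero_eq_frechet_kmeans_general v R1 R2 μ1 hμ1_nonneg hμ1_sum
end
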